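/- arXiv:1006.3954 — 8 statements merged into one kernel-verified Lean document; each statement's English description precedes it below -/
import Mathlib

section
/- For every k ≥ 0 and all z₀, z₁, …, z_{2k} ∈ ℂ, the trace of the matrix product p₀(z₀)·p₀(z₁)⋯p₀(z_{2k}) equals ∏_{l=0}^{2k} (1 + conj(z_l)·z_{l+1})/(1 + |z_l|²), where the index is cyclic, i.e. z_{2k+1} := z₀. -/
open Complex Matrix

/-- The matrix `p₀(z) := (1+|z|²)⁻¹ · [[|z|², z], [conj z, 1]]`. -/
noncomputable def p0 (z : ℂ) : Matrix (Fin 2) (Fin 2) ℂ :=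
  ((1 + Complex.normSq z : ℝ) : ℂ)⁻¹ •
    !![((Complex.normSq z : ℝ) : ℂ), z; (starRingEnd ℂ) z, 1]

/-- Rank-one matrix `v(z) v(w)^*` with `v(z) = (z, 1)ᵀ`. -/
def Amat (z w : ℂ) : Matrix (Fin 2) (Fin 2) ℂ :=
  !![z * (starRingEnd ℂ) w, z; (starRingEnd ℂ) w, 1]

lemma Amat_mul (z w u v : ℂ) :
    Amat z w * Amat u v = ((starRingEnd ℂ) w * u + 1) • Amat z v := by
  ext i j
  fin_cases i <;> fin_cases j <;>
    simp [Amat, Matrix.mul_apply, Fin.sum_univ_two] <;> ring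

lemma p0_eq (z : ℂ) : p0 z = ((1 + (Complex.normSq z : ℝ) : ℂ))⁻¹ • Amat z z := by
  unfold p0 Amat
  rw [Complex.mul_conj]
  push_cast
  rfl

lemma trace_Amat (z w : ℂ) : Matrix.trace (Amat z w) = z * (starRingEnd ℂ) w + 1 := by
  simp [Amat, Matrix.trace_fin_two]

lemma chain (n : ℕ) (z : Fin (n + 1) → ℂ) :
    (List.ofFn fun l : Fin (n + 1) => p0 (z l)).prod =
      ((∏ l : Fin n,
          (1 + (starRingEnd ℂ) (z l.castSucc) * z l.succ) /
            (1 + ((Complex.normSq (z l.castSucc) : ℝ) : ℂ))) *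
        (1 + ((Complex.normSq (z (Fin.last n)) : ℝ) : ℂ))⁻¹) •
        Amat (z 0) (z (Fin.last n)) := by
  induction n with
  | zero =>
      simp [p0_eq]
  | succ n ih =>
      rw [List.ofFn_succ']
      rw [List.prod_concat]
      have := ih (fun i => z i.castSucc)
      rw [this, p0_eq, Matrix.smul_mul, Matrix.mul_smul, Amat_mul, smul_smul, smul_smul]
      have h0 : (0 : Fin (n + 1)).castSucc = (0 : Fin (n + 2)) := rfl
      rw [h0]
      congr 1
      rw [Fin.prod_univ_castSucc]
      simp only [Fin.succ_castSucc, Fin.succ_last]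
      ring

/-- For every `k ≥ 0` and points `z₀, …, z_{2k} ∈ ℂ`, the trace of the matrix product
`p₀(z₀)·p₀(z₁)⋯p₀(z_{2k})` equals `∏_{l=0}^{2k} (1 + conj(z_l)·z_{l+1})/(1 + |z_l|²)`,
with cyclic index convention `z_{2k+1} := z₀`. -/
theorem stmt2 (k : ℕ) (z : Fin (2 * k + 1) → ℂ) :
    Matrix.trace ((List.ofFn fun l : Fin (2 * k + 1) => p0 (z l)).prod) =
      ∏ l : Fin (2 * k + 1),
        (1 + (starRingEnd ℂ) (z l) * z (l + 1)) / (1 + ((Complex.normSq (z l) : ℝ) : ℂ)) := by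
  rw [chain (2 * k) z, Matrix.trace_smul, trace_Amat, Fin.prod_univ_castSucc]
  simp only [Fin.coeSucc_eq_succ, Fin.last_add_one]
  set P := ∏ l : Fin (2 * k),
      (1 + (starRingEnd ℂ) (z l.castSucc) * z l.succ) /
        (1 + ((Complex.normSq (z l.castSucc) : ℝ) : ℂ))
  rw [smul_eq_mul]
  ring
end

section
/- For every n ≥ 1, k ≥ 0 and all points z_0, …, z_{2k} ∈ ℂⁿ (writing z_l = (z_{1,l}, …, z_{n,l})), the trace of the matrix product p_T(z_0)·p_T(z_1)⋯p_T(z_{2k}) equals ∏_{j=1}^{n} ∏_{l=0}^{2k} (1 + conj(z_{j,l})·z_{j,l+1})/(1 + |z_{j,l}|²), where the index l is cyclic, i.e. z_{j,2k+1} := z_{j,0}. -/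
/-!
`p₀(z)` is the rank-one matrix `(1+|z|²)⁻¹ u uᴴ` with `u = (z, 1)`, so `p_T(z)` is the rank-one
matrix built from the tensor product of these vectors. The product of rank-one matrices
`w₀x₀ᵀ ⋯ w_m x_mᵀ` has trace `∏_l ⟨x_l, w_{l+1}⟩` (cyclically), and the pairing of tensor products
factors over the tensor factors, where it is `(1 + conj z · z')/(1 + |z|²)`.
-/

open Complex Matrix

/-- The tensor (Kronecker) product `p_T(z) := p₀(z₁) ⊗ ⋯ ⊗ p₀(z_n)`, realized as a
`2ⁿ×2ⁿ` matrix indexed by `Fin n → Fin 2`, with entries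
`p_T(z)_{a,b} = ∏_j p₀(z_j)_{a_j, b_j}`. -/
noncomputable def pT (n : ℕ) (z : Fin n → ℂ) :
    Matrix (Fin n → Fin 2) (Fin n → Fin 2) ℂ :=
  Matrix.of fun a b => ∏ j : Fin n, p0 (z j) (a j) (b j)

namespace Matrix

variable {R ι κ : Type*} [CommSemiring R] [Fintype ι]

theorem prod_ofFn_vecMulVec [DecidableEq ι] (m : ℕ) (w x : Fin (m + 1) → ι → R) :
    (List.ofFn fun l => vecMulVec (w l) (x l)).prod =
      vecMulVec (w 0) ((∏ l : Fin m, x l.castSucc ⬝ᵥ w l.succ) • x (Fin.last m)) := by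
  induction m with
  | zero => simp
  | succ m ih =>
    rw [List.ofFn_succ, List.prod_cons, ih (fun l => w l.succ) (fun l => x l.succ),
      vecMulVec_mul_vecMulVec, smul_smul, Fin.prod_univ_succ]
    rfl

theorem trace_prod_ofFn_vecMulVec [DecidableEq ι] (m : ℕ) (w x : Fin (m + 1) → ι → R) :
    trace (List.ofFn fun l => vecMulVec (w l) (x l)).prod = ∏ l, x l ⬝ᵥ w (l + 1) := by
  rw [prod_ofFn_vecMulVec, trace_vecMulVec, dotProduct_smul, smul_eq_mul,
    Fin.prod_univ_castSucc, Fin.last_add_one, dotProduct_comm]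
  simp only [Fin.coeSucc_eq_succ]

theorem of_prod_vecMulVec_apply (w x : ι → κ → R) :
    (of fun a b : ι → κ => ∏ j, vecMulVec (w j) (x j) (a j) (b j)) =
      vecMulVec (fun a => ∏ j, w j (a j)) (fun b => ∏ j, x j (b j)) := by
  ext a b
  simp only [of_apply, vecMulVec_apply, Finset.prod_mul_distrib]

theorem dotProduct_prod_apply [DecidableEq ι] [Fintype κ] (x w : ι → κ → R) :
    (fun b : ι → κ => ∏ j, x j (b j)) ⬝ᵥ (fun a => ∏ j, w j (a j)) = ∏ j, x j ⬝ᵥ w j := by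
  simp only [dotProduct, ← Finset.prod_mul_distrib, Fintype.prod_sum]

end Matrix

theorem p0_eq_vecMulVec (z : ℂ) :
    p0 z = vecMulVec ![z, 1] (((1 + normSq z : ℝ) : ℂ)⁻¹ • star ![z, 1]) := by
  ext a b
  fin_cases a <;> fin_cases b <;> simp [p0, vecMulVec_apply, ← mul_assoc, mul_conj, mul_comm]

theorem pT_eq_vecMulVec (n : ℕ) (z : Fin n → ℂ) :
    pT n z = vecMulVec (fun a => ∏ j, ![z j, 1] (a j))
      (fun b => ∏ j, (((1 + normSq (z j) : ℝ) : ℂ)⁻¹ • star ![z j, 1]) (b j)) := by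
  simp only [pT, p0_eq_vecMulVec]
  exact of_prod_vecMulVec_apply _ _

theorem p0_dotProduct (z z' : ℂ) :
    (((1 + normSq z : ℝ) : ℂ)⁻¹ • star ![z, 1]) ⬝ᵥ ![z', 1] =
      (1 + (starRingEnd ℂ) z * z') / (1 + ((normSq z : ℝ) : ℂ)) := by
  simp only [dotProduct, Fin.sum_univ_two, Pi.smul_apply, Pi.star_apply, smul_eq_mul,
    cons_val_zero, cons_val_one, cons_val_fin_one, RCLike.star_def, map_one, ofReal_add, ofReal_one]
  ring

theorem stmt3_general (n k : ℕ) (z : Fin (2 * k + 1) → Fin n → ℂ) :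
    Matrix.trace ((List.ofFn fun l : Fin (2 * k + 1) => pT n (z l)).prod) =
      ∏ j : Fin n, ∏ l : Fin (2 * k + 1),
        (1 + (starRingEnd ℂ) (z l j) * z (l + 1) j) /
          (1 + ((Complex.normSq (z l j) : ℝ) : ℂ)) := by
  simp only [pT_eq_vecMulVec]
  rw [trace_prod_ofFn_vecMulVec, Finset.prod_comm]
  simp only [dotProduct_prod_apply, p0_dotProduct]

/-- For every `n ≥ 1`, `k ≥ 0` and points `z_0, …, z_{2k} ∈ ℂⁿ`, the trace of the
product `p_T(z_0)⋯p_T(z_{2k})` equals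
`∏_{j=1}^{n} ∏_{l=0}^{2k} (1 + conj(z_{j,l})·z_{j,l+1})/(1 + |z_{j,l}|²)`,
with the cyclic convention `z_{j,2k+1} := z_{j,0}`. -/
theorem stmt3 (n k : ℕ) (hn : 1 ≤ n) (z : Fin (2 * k + 1) → Fin n → ℂ) :
    Matrix.trace ((List.ofFn fun l : Fin (2 * k + 1) => pT n (z l)).prod) =
      ∏ j : Fin n, ∏ l : Fin (2 * k + 1),
        (1 + (starRingEnd ℂ) (z l j) * z (l + 1) j) /
          (1 + ((Complex.normSq (z l j) : ℝ) : ℂ)) :=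
  stmt3_general n k z
end

section
/- Regard p₀ as a smooth map from ℝ² ≅ ℂ to the 2×2 complex matrices (z = x + iy), and let ∂ₓp₀ and ∂_yp₀ denote its partial derivatives (the real Fréchet derivative applied to the directions 1 and i). Then for every z ∈ ℂ, the trace of p₀(z)·(∂ₓp₀(z)·∂_yp₀(z) − ∂_yp₀(z)·∂ₓp₀(z)) equals 2i/(1+|z|²)². (This is the Chern-form computation underlying the identity ch[p₀] = 1 + ω/(2π) for the tautological line bundle on S² ≅ ℙ¹(ℂ), ω being the Fubini–Study form.) -/
open Complex Matrix

/-- `p₀` regarded as a map from `ℂ ≅ ℝ²` into `ℂ`-valued `2×2` arrays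
(the space `Fin 2 → Fin 2 → ℂ`, which carries its product normed-space structure
over `ℝ`), so that real Fréchet derivatives can be taken. -/
noncomputable def p0fun (z : ℂ) : Fin 2 → Fin 2 → ℂ := fun i j => p0 z i j

/-- The partial derivative `∂ₓp₀(z)`: the real Fréchet derivative of `p₀` at `z`
applied to the direction `1`. -/
noncomputable def dxP0 (z : ℂ) : Matrix (Fin 2) (Fin 2) ℂ :=
  Matrix.of (fderiv ℝ p0fun z 1)

/-- The partial derivative `∂_yp₀(z)`: the real Fréchet derivative of `p₀` at `z`
applied to the direction `i`. -/
noncomputable def dyP0 (z : ℂ) : Matrix (Fin 2) (Fin 2) ℂ :=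
  Matrix.of (fderiv ℝ p0fun z Complex.I)

/-
Write `p₀ = N⁻¹ • M` with `N = 1 + z z̄` and `M = [[z z̄, z], [z̄, 1]]`. The quotient rule gives
`∂ᵥp₀ = N⁻¹ • (∂ᵥM - (∂ᵥN) • p₀)`. As `p₀` is idempotent, `tr (p₀ [X, p₀]) = 0` for every `X`,
so the `p₀`-terms drop out of `tr (p₀ [∂ₓp₀, ∂_yp₀])`, leaving `N⁻² tr (p₀ [∂ₓM, ∂_yM])`; and a
direct computation gives `tr (p₀ [∂ᵥM, ∂_wM]) = v̄ w - v w̄`, which is `2i` for `v = 1`, `w = i`.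
-/

open ComplexConjugate

theorem fderiv_apply_apply {𝕜 E F ι κ : Type*} [NontriviallyNormedField 𝕜]
    [NormedAddCommGroup E] [NormedSpace 𝕜 E] [NormedAddCommGroup F] [NormedSpace 𝕜 F]
    [Fintype ι] [Fintype κ] {f : E → ι → κ → F} {x : E}
    (hf : ∀ i j, DifferentiableAt 𝕜 (fun y => f y i j) x) (v : E) (i : ι) (j : κ) :
    fderiv 𝕜 f x v i j = fderiv 𝕜 (fun y => f y i j) x v := by
  have hrow : ∀ i, DifferentiableAt 𝕜 (fun y => f y i) x := fun i => differentiableAt_pi.2 (hf i)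
  rw [fderiv_apply (hrow i) j, fderiv_apply (differentiableAt_pi.2 hrow) i]
  rfl

theorem Matrix.trace_mul_commutator_eq_zero_of_isIdempotentElem {n R : Type*} [Fintype n]
    [CommRing R] {p : Matrix n n R} (hp : IsIdempotentElem p) (X : Matrix n n R) :
    trace (p * (X * p - p * X)) = 0 := by
  rw [mul_sub, trace_sub, trace_mul_comm, mul_assoc, hp.eq, ← mul_assoc, hp.eq, trace_mul_comm,
    sub_self]

theorem Matrix.trace_mul_commutator_smul_sub_smul {n R : Type*} [Fintype n] [CommRing R]
    {p : Matrix n n R} (hp : IsIdempotentElem p) (c a b : R) (A B : Matrix n n R) :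
    trace (p * (c • (A - a • p) * (c • (B - b • p)) - c • (B - b • p) * (c • (A - a • p)))) =
      c ^ 2 * trace (p * (A * B - B * A)) := by
  have hexpand : c • (A - a • p) * (c • (B - b • p)) - c • (B - b • p) * (c • (A - a • p)) =
      c ^ 2 • ((A * B - B * A) - b • (A * p - p * A) + a • (B * p - p * B)) := by
    simp only [sub_mul, mul_sub, smul_mul_assoc, mul_smul_comm, smul_smul, smul_sub]
    module
  rw [hexpand, mul_smul_comm, trace_smul, mul_add, mul_sub, trace_add, trace_sub, mul_smul_comm,
    mul_smul_comm, trace_smul, trace_smul, trace_mul_commutator_eq_zero_of_isIdempotentElem hp,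
    trace_mul_commutator_eq_zero_of_isIdempotentElem hp, smul_zero, smul_zero, sub_zero, add_zero,
    smul_eq_mul]

lemma one_add_mul_conj_ne_zero (z : ℂ) : 1 + z * conj z ≠ 0 := by
  rw [mul_conj, ← ofReal_one, ← ofReal_add, ofReal_ne_zero]
  exact (add_pos_of_pos_of_nonneg one_pos (normSq_nonneg z)).ne'

def p0Num (z : ℂ) : Matrix (Fin 2) (Fin 2) ℂ := !![z * conj z, z; conj z, 1]

def p0NumDeriv (z v : ℂ) : Matrix (Fin 2) (Fin 2) ℂ := !![z * conj v + conj z * v, v; conj v, 0]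

lemma p0_eq_smul (z : ℂ) : p0 z = (1 + z * conj z)⁻¹ • p0Num z := by
  rw [p0, ofReal_add, ofReal_one, ← mul_conj]
  rfl

lemma p0Num_mul_self (z : ℂ) : p0Num z * p0Num z = (1 + z * conj z) • p0Num z := by
  ext i j
  fin_cases i <;> fin_cases j <;> simp [p0Num] <;> ring

lemma isIdempotentElem_p0 (z : ℂ) : IsIdempotentElem (p0 z) := by
  have := one_add_mul_conj_ne_zero z
  rw [IsIdempotentElem, p0_eq_smul, smul_mul_smul_comm, p0Num_mul_self, smul_smul]
  field_simp

lemma hasFDerivAt_mul_conj (z : ℂ) :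
    HasFDerivAt (fun w : ℂ => w * conj w)
      (z • conjCLE.toContinuousLinearMap + conj z • ContinuousLinearMap.id ℝ ℂ) z :=
  (hasFDerivAt_id z).mul conjCLE.hasFDerivAt

lemma fderiv_inv_one_add_mul_conj_mul {z : ℂ} {g : ℂ → ℂ} (hg : DifferentiableAt ℝ g z) (v : ℂ) :
    fderiv ℝ (fun w => (1 + w * conj w)⁻¹ * g w) z v =
      (1 + z * conj z)⁻¹ *
        (fderiv ℝ g z v - (z * conj v + conj z * v) * ((1 + z * conj z)⁻¹ * g z)) := by
  have h : HasFDerivAt (fun w => (1 + w * conj w)⁻¹ * g w) _ z :=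
    ((hasFDerivAt_inv' (one_add_mul_conj_ne_zero z)).comp z
      ((hasFDerivAt_mul_conj z).const_add 1)).fun_mul hg.hasFDerivAt
  rw [h.fderiv]
  simp only [ContinuousLinearMap.comp_add, ContinuousLinearMap.neg_comp, smul_add, smul_neg,
    _root_.add_apply, _root_.smul_apply, smul_eq_mul, _root_.neg_apply,
    ContinuousLinearMap.comp_apply, ContinuousLinearEquiv.coe_coe, ContinuousAlgEquiv.coeCLE_apply,
    conjCAE_apply, ContinuousLinearMap.mulLeftRight_apply, ContinuousLinearMap.id_apply]
  ring

lemma differentiableAt_p0Num_apply (z : ℂ) (i j : Fin 2) :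
    DifferentiableAt ℝ (fun w => p0Num w i j) z := by
  fin_cases i <;> fin_cases j <;> simp [p0Num] <;> fun_prop

lemma fderiv_p0Num_apply (z v : ℂ) (i j : Fin 2) :
    fderiv ℝ (fun w => p0Num w i j) z v = p0NumDeriv z v i j := by
  have hconj : HasFDerivAt (fun w : ℂ => conj w) conjCLE.toContinuousLinearMap z :=
    conjCLE.hasFDerivAt
  fin_cases i <;> fin_cases j <;>
    simp [p0Num, p0NumDeriv, (hasFDerivAt_mul_conj z).fderiv, hconj.fderiv]

lemma fderiv_p0fun (z v : ℂ) :
    Matrix.of (fderiv ℝ p0fun z v) =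
      (1 + z * conj z)⁻¹ • (p0NumDeriv z v - (z * conj v + conj z * v) • p0 z) := by
  have hentry : ∀ i j, (fun w => p0fun w i j) = fun w => (1 + w * conj w)⁻¹ * p0Num w i j := by
    intro i j; funext w; simp [p0fun, p0_eq_smul]
  have hdiff : ∀ i j, DifferentiableAt ℝ (fun w => p0fun w i j) z := by
    intro i j
    rw [hentry]
    exact .mul (by fun_prop (disch := exact one_add_mul_conj_ne_zero z))
      (differentiableAt_p0Num_apply z i j)
  ext i j
  rw [of_apply, fderiv_apply_apply hdiff, hentry,
    fderiv_inv_one_add_mul_conj_mul (differentiableAt_p0Num_apply z i j), fderiv_p0Num_apply]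
  simp [p0_eq_smul]

lemma trace_p0Num_mul_commutator (z v w : ℂ) :
    trace (p0Num z * (p0NumDeriv z v * p0NumDeriv z w - p0NumDeriv z w * p0NumDeriv z v)) =
      (1 + z * conj z) * (conj v * w - v * conj w) := by
  rw [trace_fin_two]
  simp [p0Num, p0NumDeriv]
  ring

lemma trace_p0_mul_commutator (z v w : ℂ) :
    trace (p0 z * (p0NumDeriv z v * p0NumDeriv z w - p0NumDeriv z w * p0NumDeriv z v)) =
      conj v * w - v * conj w := by
  have := one_add_mul_conj_ne_zero z
  rw [p0_eq_smul, smul_mul_assoc, trace_smul, trace_p0Num_mul_commutator, smul_eq_mul]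
  field_simp

/-- For every `z ∈ ℂ`, `tr(p₀(z)·(∂ₓp₀(z)·∂_yp₀(z) − ∂_yp₀(z)·∂ₓp₀(z))) = 2i/(1+|z|²)²`
(the Chern-form computation underlying `ch[p₀] = 1 + ω/(2π)` for the tautological
line bundle on `S² ≅ ℙ¹(ℂ)`, `ω` the Fubini–Study form). -/
theorem stmt5 (z : ℂ) :
    Matrix.trace (p0 z * (dxP0 z * dyP0 z - dyP0 z * dxP0 z)) =
      2 * Complex.I / ((1 + ((Complex.normSq z : ℝ) : ℂ)) ^ 2) := by
  rw [dxP0, dyP0, fderiv_p0fun, fderiv_p0fun,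
    trace_mul_commutator_smul_sub_smul (isIdempotentElem_p0 z), trace_p0_mul_commutator,
    ← mul_conj]
  simp only [inv_pow, map_one, one_mul, conj_I, mul_neg, sub_neg_eq_add]
  ring
end

section
/- Let n ≥ 1, let 0 < α ≤ 1, let a : ℝⁿ → ℂ be Hölder continuous with exponent α and constant C_a, and let K : ℝⁿ×ℝⁿ → ℂ satisfy |K(x,y)| ≤ C·|x−y|^{−n} for all x ≠ y. Then for every R > 0 and every q > max(n/α, 2), setting q' := q/(q−1), the kernel k(x,y) := (a(x) − a(y))·K(x,y) restricted to B(0,R)×B(0,R) has finite mixed (q',q)-norm: ∫_{B(0,R)} ( ∫_{B(0,R)} |k(x,y)|^{q'} dx )^{q/q'} dy < ∞. -/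
open Complex MeasureTheory
open MeasureTheory Set Metric
open scoped ENNReal

lemma aux_rpow_finite (n : ℕ) (hn : 1 ≤ n) {s : ℝ} (hs : -(n : ℝ) < s) (ρ : ℝ) :
    ∫⁻ x in Metric.ball (0 : EuclideanSpace ℝ (Fin n)) ρ,
      ENNReal.ofReal (‖x‖ ^ s) < ⊤ := by
  rcases le_or_gt ρ 0 with hρ | hρ
  · rw [Metric.ball_eq_empty.mpr hρ]; simp
  rcases le_or_gt 0 s with hs0 | hs0
  · calc ∫⁻ x in Metric.ball (0 : EuclideanSpace ℝ (Fin n)) ρ, ENNReal.ofReal (‖x‖ ^ s)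
        ≤ ∫⁻ _x in Metric.ball (0 : EuclideanSpace ℝ (Fin n)) ρ, ENNReal.ofReal (ρ ^ s) := by
          refine setLIntegral_mono' measurableSet_ball fun x hx => ?_
          exact ENNReal.ofReal_le_ofReal (Real.rpow_le_rpow (norm_nonneg x)
            (le_of_lt (mem_ball_zero_iff.mp hx)) hs0)
      _ = ENNReal.ofReal (ρ ^ s) * volume (Metric.ball (0 : EuclideanSpace ℝ (Fin n)) ρ) :=
          setLIntegral_const _ _
      _ < ⊤ := ENNReal.mul_lt_top ENNReal.ofReal_lt_top measure_ball_lt_top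
  · set μ := volume.restrict (Metric.ball (0 : EuclideanSpace ℝ (Fin n)) ρ) with hμ
    have hmeas : Measurable fun x : EuclideanSpace ℝ (Fin n) => ‖x‖ ^ s := by fun_prop
    rw [lintegral_eq_lintegral_meas_le μ
      (Filter.Eventually.of_forall fun x => Real.rpow_nonneg (norm_nonneg x) s) hmeas.aemeasurable]
    calc ∫⁻ t in Ioi 0, μ {x | t ≤ ‖x‖ ^ s}
        ≤ ∫⁻ t in Ioc 0 1 ∪ Ioi 1, μ {x | t ≤ ‖x‖ ^ s} :=
          lintegral_mono_set Ioi_subset_Ioc_union_Ioi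
      _ ≤ (∫⁻ t in Ioc 0 1, μ {x | t ≤ ‖x‖ ^ s}) + ∫⁻ t in Ioi 1, μ {x | t ≤ ‖x‖ ^ s} :=
          lintegral_union_le _ _ _
      _ < ⊤ := by
          refine ENNReal.add_lt_top.2 ⟨?_, ?_⟩
          · calc (∫⁻ t in Ioc 0 1, μ {x | t ≤ ‖x‖ ^ s})
                ≤ ∫⁻ _t in Ioc (0:ℝ) 1, volume (Metric.ball (0 : EuclideanSpace ℝ (Fin n)) ρ) := by
                  refine setLIntegral_mono' measurableSet_Ioc fun t _ => ?_
                  exact (measure_mono (subset_univ _)).trans_eq (Measure.restrict_apply_univ _)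
              _ = volume (Metric.ball (0 : EuclideanSpace ℝ (Fin n)) ρ) * volume (Ioc (0:ℝ) 1) :=
                  setLIntegral_const _ _
              _ < ⊤ := ENNReal.mul_lt_top measure_ball_lt_top measure_Ioc_lt_top
          · have hp : (n : ℝ) * s⁻¹ < -1 := by
              rw [show (-1 : ℝ) = -s * s⁻¹ by rw [neg_mul, mul_inv_cancel₀ hs0.ne]]
              exact mul_lt_mul_of_neg_right (by linarith) (inv_neg''.mpr hs0)
            calc (∫⁻ t in Ioi 1, μ {x | t ≤ ‖x‖ ^ s})
                ≤ ∫⁻ t in Ioi (1:ℝ), ENNReal.ofReal (t ^ ((n : ℝ) * s⁻¹)) *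
                    volume (Metric.ball (0 : EuclideanSpace ℝ (Fin n)) 1) := by
                  refine setLIntegral_mono' measurableSet_Ioi fun t ht => ?_
                  have ht0 : (0:ℝ) < t := lt_trans one_pos ht
                  have hsub : {x : EuclideanSpace ℝ (Fin n) | t ≤ ‖x‖ ^ s} ⊆
                      Metric.closedBall 0 (t ^ s⁻¹) := by
                    intro x hx
                    simp only [mem_setOf_eq] at hx
                    rcases eq_or_ne x 0 with rfl | hx0
                    · rw [norm_zero, Real.zero_rpow hs0.ne] at hx
                      exact absurd (lt_of_lt_of_le ht0 hx) (lt_irrefl 0)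
                    · have hxn : 0 < ‖x‖ := norm_pos_iff.mpr hx0
                      rw [mem_closedBall_zero_iff]
                      exact (Real.le_rpow_inv_iff_of_neg hxn ht0 hs0).mpr hx
                  calc μ {x | t ≤ ‖x‖ ^ s} ≤ volume {x : EuclideanSpace ℝ (Fin n) | t ≤ ‖x‖ ^ s} :=
                        Measure.restrict_le_self _
                    _ ≤ volume (Metric.closedBall (0 : EuclideanSpace ℝ (Fin n)) (t ^ s⁻¹)) :=
                        measure_mono hsub
                    _ = ENNReal.ofReal ((t ^ s⁻¹) ^ Module.finrank ℝ (EuclideanSpace ℝ (Fin n))) *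
                        volume (Metric.ball (0 : EuclideanSpace ℝ (Fin n)) 1) :=
                        Measure.addHaar_closedBall _ _ (Real.rpow_nonneg ht0.le _)
                    _ = ENNReal.ofReal (t ^ ((n : ℝ) * s⁻¹)) *
                        volume (Metric.ball (0 : EuclideanSpace ℝ (Fin n)) 1) := by
                        rw [finrank_euclideanSpace_fin, ← Real.rpow_natCast (t ^ s⁻¹) n,
                          ← Real.rpow_mul ht0.le, inv_mul_eq_div, mul_comm (n:ℝ) s⁻¹,
                          inv_mul_eq_div]
              _ = (∫⁻ t in Ioi (1:ℝ), ENNReal.ofReal (t ^ ((n : ℝ) * s⁻¹))) *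
                    volume (Metric.ball (0 : EuclideanSpace ℝ (Fin n)) 1) :=
                  lintegral_mul_const' _ _ measure_ball_lt_top.ne
              _ < ⊤ := ENNReal.mul_lt_top
                  (IntegrableOn.setLIntegral_lt_top (integrableOn_Ioi_rpow_of_lt hp one_pos))
                  measure_ball_lt_top
/-- Let `n ≥ 1`, `0 < α ≤ 1`, let `a : ℝⁿ → ℂ` be Hölder continuous with exponent `α`
and constant `C_a`, and let `K : ℝⁿ×ℝⁿ → ℂ` satisfy `|K(x,y)| ≤ C·|x−y|^{−n}` for
`x ≠ y`. Then for every `R > 0` and every `q > max(n/α, 2)`, with `q' := q/(q−1)`,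
the kernel `k(x,y) := (a(x) − a(y))·K(x,y)` restricted to `B(0,R)×B(0,R)` has finite
mixed `(q',q)`-norm: `∫_{B(0,R)} ( ∫_{B(0,R)} |k(x,y)|^{q'} dx )^{q/q'} dy < ∞`. -/
theorem stmt9 (n : ℕ) (hn : 1 ≤ n) (α Ca C : ℝ) (hα₀ : 0 < α) (hα₁ : α ≤ 1)
    (a : EuclideanSpace ℝ (Fin n) → ℂ)
    (ha : ∀ x y : EuclideanSpace ℝ (Fin n), ‖a x - a y‖ ≤ Ca * ‖x - y‖ ^ α)
    (K : EuclideanSpace ℝ (Fin n) → EuclideanSpace ℝ (Fin n) → ℂ)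
    (hK : ∀ x y : EuclideanSpace ℝ (Fin n), x ≠ y →
      ‖K x y‖ ≤ C * ‖x - y‖ ^ (-(n : ℝ)))
    (R q q' : ℝ) (hR : 0 < R) (hq : max ((n : ℝ) / α) 2 < q)
    (hq' : q' = q / (q - 1)) :
    (∫⁻ y in Metric.ball (0 : EuclideanSpace ℝ (Fin n)) R,
        (∫⁻ x in Metric.ball (0 : EuclideanSpace ℝ (Fin n)) R,
          ENNReal.ofReal (‖(a x - a y) * K x y‖ ^ q')) ^ (q / q')) < ⊤ := by
  have hq2 : 2 < q := lt_of_le_of_lt (le_max_right _ _) hq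
  have hqn : (n : ℝ) / α < q := lt_of_le_of_lt (le_max_left _ _) hq
  have hq1 : 1 < q := by linarith
  have hq10 : 0 < q - 1 := by linarith
  have hq'pos : 0 < q' := by rw [hq']; positivity
  have hnαq : (n : ℝ) < α * q := by
    rw [div_lt_iff₀ hα₀] at hqn; linarith
  have hs : -(n : ℝ) < (α - (n : ℝ)) * q' := by
    rw [hq', ← mul_div_assoc, lt_div_iff₀ hq10]; nlinarith
  set s : ℝ := (α - (n : ℝ)) * q' with hsdef
  set M := max Ca 0 with hMdef
  set N := max C 0 with hNdef
  have hM : 0 ≤ M := le_max_right _ _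
  have hN : 0 ≤ N := le_max_right _ _
  have hbound : ∀ x y : EuclideanSpace ℝ (Fin n),
      ENNReal.ofReal (‖(a x - a y) * K x y‖ ^ q') ≤
      ENNReal.ofReal ((M * N) ^ q') * ENNReal.ofReal (‖x - y‖ ^ s) := by
    intro x y
    rcases eq_or_ne x y with rfl | hxy
    · simp [Real.zero_rpow hq'pos.ne']
    · have hd : 0 < ‖x - y‖ := by rwa [norm_pos_iff, sub_ne_zero]
      have h1 : ‖(a x - a y) * K x y‖ ≤ (M * N) * ‖x - y‖ ^ (α - (n : ℝ)) := by
        rw [norm_mul]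
        have ha' : ‖a x - a y‖ ≤ M * ‖x - y‖ ^ α :=
          (ha x y).trans (mul_le_mul_of_nonneg_right (le_max_left _ _)
            (Real.rpow_nonneg hd.le _))
        have hK' : ‖K x y‖ ≤ N * ‖x - y‖ ^ (-(n : ℝ)) :=
          (hK x y hxy).trans (mul_le_mul_of_nonneg_right (le_max_left _ _)
            (Real.rpow_nonneg hd.le _))
        calc ‖a x - a y‖ * ‖K x y‖
            ≤ (M * ‖x - y‖ ^ α) * (N * ‖x - y‖ ^ (-(n : ℝ))) :=
              mul_le_mul ha' hK' (norm_nonneg _) (by positivity)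
          _ = (M * N) * (‖x - y‖ ^ α * ‖x - y‖ ^ (-(n : ℝ))) := by ring
          _ = (M * N) * ‖x - y‖ ^ (α - (n : ℝ)) := by
              rw [← Real.rpow_add hd, ← sub_eq_add_neg]
      have h2 : ‖(a x - a y) * K x y‖ ^ q' ≤ ((M * N) * ‖x - y‖ ^ (α - (n : ℝ))) ^ q' :=
        Real.rpow_le_rpow (norm_nonneg _) h1 hq'pos.le
      refine le_trans (ENNReal.ofReal_le_ofReal h2) (le_of_eq ?_)
      rw [Real.mul_rpow (mul_nonneg hM hN) (Real.rpow_nonneg hd.le _),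
        ← Real.rpow_mul hd.le, ← ENNReal.ofReal_mul (by positivity)]
  set B : ℝ≥0∞ := ENNReal.ofReal ((M * N) ^ q') *
      ∫⁻ x in Metric.ball (0 : EuclideanSpace ℝ (Fin n)) (2 * R),
        ENNReal.ofReal (‖x‖ ^ s) with hBdef
  have hBlt : B < ⊤ := ENNReal.mul_lt_top ENNReal.ofReal_lt_top (aux_rpow_finite n hn hs _)
  have hinner : ∀ y ∈ Metric.ball (0 : EuclideanSpace ℝ (Fin n)) R,
      (∫⁻ x in Metric.ball (0 : EuclideanSpace ℝ (Fin n)) R,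
        ENNReal.ofReal (‖(a x - a y) * K x y‖ ^ q')) ≤ B := by
    intro y hy
    rw [mem_ball_zero_iff] at hy
    calc (∫⁻ x in Metric.ball (0 : EuclideanSpace ℝ (Fin n)) R,
          ENNReal.ofReal (‖(a x - a y) * K x y‖ ^ q'))
        ≤ ∫⁻ x in Metric.ball (0 : EuclideanSpace ℝ (Fin n)) R,
            ENNReal.ofReal ((M * N) ^ q') * ENNReal.ofReal (‖x - y‖ ^ s) :=
          lintegral_mono fun x => hbound x y
      _ = ENNReal.ofReal ((M * N) ^ q') *
            ∫⁻ x in Metric.ball (0 : EuclideanSpace ℝ (Fin n)) R,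
              ENNReal.ofReal (‖x - y‖ ^ s) :=
          lintegral_const_mul' _ _ ENNReal.ofReal_ne_top
      _ ≤ ENNReal.ofReal ((M * N) ^ q') *
            ∫⁻ x in Metric.ball y (2 * R), ENNReal.ofReal (‖x - y‖ ^ s) := by
          refine mul_le_mul_right (lintegral_mono_set fun x hx => ?_) _
          rw [mem_ball_zero_iff] at hx
          rw [Metric.mem_ball, dist_eq_norm]
          calc ‖x - y‖ ≤ ‖x‖ + ‖y‖ := norm_sub_le _ _
            _ < 2 * R := by linarith
      _ = B := by
          rw [hBdef]
          congr 1
          have hind : ∀ x : EuclideanSpace ℝ (Fin n),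
              (Metric.ball y (2 * R)).indicator
                (fun x => ENNReal.ofReal (‖x - y‖ ^ s)) x =
              ((Metric.ball (0 : EuclideanSpace ℝ (Fin n)) (2 * R)).indicator
                (fun x => ENNReal.ofReal (‖x‖ ^ s))) (x + -y) := by
            intro x
            rw [← sub_eq_add_neg]
            by_cases hx : x ∈ Metric.ball y (2 * R)
            · rw [Set.indicator_of_mem hx, Set.indicator_of_mem
                (by rwa [mem_ball_zero_iff, ← dist_eq_norm, ← Metric.mem_ball])]
            · rw [Set.indicator_of_notMem hx, Set.indicator_of_notMem
                (by rwa [mem_ball_zero_iff, ← dist_eq_norm, ← Metric.mem_ball])]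
          rw [← lintegral_indicator measurableSet_ball,
            ← lintegral_indicator measurableSet_ball, lintegral_congr hind,
            lintegral_add_right_eq_self _ (-y)]
  calc (∫⁻ y in Metric.ball (0 : EuclideanSpace ℝ (Fin n)) R,
        (∫⁻ x in Metric.ball (0 : EuclideanSpace ℝ (Fin n)) R,
          ENNReal.ofReal (‖(a x - a y) * K x y‖ ^ q')) ^ (q / q'))
      ≤ ∫⁻ _y in Metric.ball (0 : EuclideanSpace ℝ (Fin n)) R, B ^ (q / q') :=
        setLIntegral_mono' measurableSet_ball fun y hy =>
          ENNReal.rpow_le_rpow (hinner y hy) (by positivity)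
    _ = B ^ (q / q') * volume (Metric.ball (0 : EuclideanSpace ℝ (Fin n)) R) :=
        setLIntegral_const _ _
    _ < ⊤ := ENNReal.mul_lt_top
        (ENNReal.rpow_lt_top_of_nonneg (by positivity) hBlt.ne) measure_ball_lt_top
end

section
/- Let X be a type, N, M ≥ 1, let p : X → M_N(ℂ) and K : X × X → M_M(ℂ) be arbitrary functions, let γ ∈ M_M(ℂ), let k ≥ 1, and let x₁, …, x_{2k} ∈ X with the cyclic convention x_{2k+1} := x₁. For each sequence s ∈ {1,2}^{2k} define indices i_l := l if s_l = 1 and i_l := l+1 if s_l = 2 (with i_l taken modulo 2k in {1,…,2k}), and define the sign ι(s) := (−1)^{#{l : s_l = 2}}. Then, with ⊗ denoting the Kronecker product, tr( (γ ⊗ p(x₁)) · ∏_{j=1}^{2k} ( K(x_j, x_{j+1}) ⊗ (p(x_{j+1}) − p(x_j)) ) ) = Σ_{s ∈ {1,2}^{2k}} ι(s) · tr( p(x₁) · ∏_{l=1}^{2k} p(x_{i_l}) ) · tr( γ · ∏_{j=1}^{2k} K(x_j, x_{j+1}) ). -/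
open Matrix Kronecker

lemma expand_prod_sub {R : Type*} [Ring R] : ∀ (r : ℕ) (f g : Fin r → R),
    (List.ofFn fun l => f l - g l).prod
      = ∑ s : Fin r → Bool, (-1 : R) ^ ((Finset.univ.filter fun l => s l = false).card) *
          (List.ofFn fun l => if s l then f l else g l).prod := by
  intro r
  induction r with
  | zero => intro f g; simp
  | succ r ih =>
    intro f g
    rw [List.ofFn_succ, List.prod_cons, sub_mul, ih (fun l => f l.succ) (fun l => g l.succ)]
    rw [← (Fin.consEquiv fun _ : Fin (r+1) => Bool).sum_comp]
    rw [Fintype.sum_prod_type, Fintype.sum_bool]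
    simp only [Fin.consEquiv_apply, Finset.card_filter, Fin.sum_univ_succ, Fin.cons_zero,
      Fin.cons_succ, List.ofFn_succ, List.prod_cons, reduceIte, zero_add, pow_add, pow_one]
    rw [Finset.mul_sum, Finset.mul_sum, ← Finset.sum_sub_distrib, ← Finset.sum_add_distrib]
    refine Finset.sum_congr rfl fun s _ => ?_
    simp only [Bool.true_eq_false, Bool.false_eq_true, if_false, pow_zero]
    have hc : ∀ y : R, (-1 : R) ^ (∑ x : Fin r, if s x = false then 1 else 0) * y
        = y * (-1 : R) ^ (∑ x : Fin r, if s x = false then 1 else 0) :=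
      fun y => ((Commute.neg_one_left y).pow_left _).eq
    rw [one_mul, neg_one_mul, neg_mul, ← sub_eq_add_neg]
    conv_rhs => rw [← mul_assoc, ← mul_assoc, hc (f 0), hc (g 0)]
    rw [mul_assoc, mul_assoc]

lemma kron_ofFn_prod {m n : ℕ} : ∀ (r : ℕ) (A : Fin r → Matrix (Fin m) (Fin m) ℂ)
    (B : Fin r → Matrix (Fin n) (Fin n) ℂ),
    (List.ofFn fun j => A j ⊗ₖ B j).prod = (List.ofFn A).prod ⊗ₖ (List.ofFn B).prod := by
  intro r
  induction r with
  | zero => intro A B; simp [Matrix.one_kronecker_one]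
  | succ r ih =>
    intro A B
    simp only [List.ofFn_succ, List.prod_cons, ih, Matrix.mul_kronecker_mul]


lemma neg_one_pow_mat {n : ℕ} (c : ℕ) (A : Matrix (Fin n) (Fin n) ℂ) :
    (-1 : Matrix (Fin n) (Fin n) ℂ) ^ c * A = ((-1 : ℂ) ^ c) • A := by
  have h : (-1 : Matrix (Fin n) (Fin n) ℂ) = (-1 : ℂ) • 1 := by simp
  rw [h, smul_pow, one_pow, smul_mul_assoc, one_mul]

lemma sign_swap {r : ℕ} (s : Fin (2 * r) → Bool) :
    ((-1 : ℂ) ^ (Finset.univ.filter fun l => s l = false).card)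
      = (-1 : ℂ) ^ (Finset.univ.filter fun l => s l = true).card := by
  set a := (Finset.univ.filter fun l => s l = false).card with ha
  set b := (Finset.univ.filter fun l => s l = true).card with hb
  have hab : b + a = 2 * r := by
    rw [hb, ha]
    have := Finset.card_filter_add_card_filter_not
      (s := (Finset.univ : Finset (Fin (2 * r)))) (p := fun l => s l = true)
    simp only [Finset.card_univ, Fintype.card_fin] at this
    simp only [Bool.not_eq_true] at this
    exact this
  have key : a + 2 * b = 2 * r + b := by omega
  calc ((-1 : ℂ)) ^ a = (-1) ^ a * ((-1) ^ 2) ^ b := by norm_num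
    _ = (-1) ^ (a + 2 * b) := by rw [← pow_mul, ← pow_add]
    _ = (-1) ^ (2 * r + b) := by rw [key]
    _ = ((-1) ^ 2) ^ r * (-1) ^ b := by rw [pow_add, pow_mul]
    _ = (-1) ^ b := by norm_num


/-- Trace expansion of the "supertrace" product: for arbitrary `p : X → M_N(ℂ)`,
`K : X × X → M_M(ℂ)`, `γ ∈ M_M(ℂ)`, `k ≥ 1`, and points `x₁, …, x_{2k}` with the
cyclic convention `x_{2k+1} := x₁`,
`tr((γ ⊗ p(x₁)) · ∏_{j=1}^{2k} (K(x_j,x_{j+1}) ⊗ (p(x_{j+1}) − p(x_j))))`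
`= Σ_{s ∈ {1,2}^{2k}} ι(s) · tr(p(x₁)·∏_{l=1}^{2k} p(x_{i_l})) · tr(γ·∏_{j=1}^{2k} K(x_j,x_{j+1}))`,
where `i_l := l` if `s_l = 1` and `i_l := l+1` if `s_l = 2` (mod `2k` in `{1,…,2k}`),
and `ι(s) := (−1)^{#{l : s_l = 2}}`. Here `s_l = 2` is encoded as `s l = true`. -/
theorem stmt12 {X : Type*} (N M k : ℕ) (hN : 1 ≤ N) (hM : 1 ≤ M) (hk : 1 ≤ k)
    (p : X → Matrix (Fin N) (Fin N) ℂ)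
    (K : X × X → Matrix (Fin M) (Fin M) ℂ)
    (γ : Matrix (Fin M) (Fin M) ℂ)
    (x : ℕ → X) (hx : x (2 * k + 1) = x 1) :
    Matrix.trace ((γ ⊗ₖ p (x 1)) *
        (List.ofFn fun j : Fin (2 * k) =>
          K (x (j.val + 1), x (j.val + 2)) ⊗ₖ (p (x (j.val + 2)) - p (x (j.val + 1)))).prod) =
      ∑ s : Fin (2 * k) → Bool,
        ((-1 : ℂ) ^ (Finset.univ.filter fun l : Fin (2 * k) => s l = true).card) *
          Matrix.trace (p (x 1) *
            (List.ofFn fun l : Fin (2 * k) =>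
              p (x (if s l then l.val + 2 else l.val + 1))).prod) *
          Matrix.trace (γ *
            (List.ofFn fun j : Fin (2 * k) => K (x (j.val + 1), x (j.val + 2))).prod) := by
  rw [kron_ofFn_prod (2 * k) (fun j => K (x (j.val + 1), x (j.val + 2)))
      (fun j => p (x (j.val + 2)) - p (x (j.val + 1))),
    ← Matrix.mul_kronecker_mul, Matrix.trace_kronecker,
    expand_prod_sub (2 * k) (fun l => p (x (l.val + 2))) (fun l => p (x (l.val + 1))),
    Finset.mul_sum, Matrix.trace_sum, Finset.mul_sum]
  refine Finset.sum_congr rfl fun s _ => ?_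
  rw [neg_one_pow_mat, mul_smul_comm, Matrix.trace_smul, sign_swap s]
  have hL : (List.ofFn fun l : Fin (2 * k) =>
      if s l then p (x (l.val + 2)) else p (x (l.val + 1)))
      = List.ofFn fun l : Fin (2 * k) => p (x (if s l then l.val + 2 else l.val + 1)) := by
    simp [apply_ite (fun y => p (x y))]
  rw [hL, smul_eq_mul]
  ring
end

section
/- Let n ≥ 1 and let z, ζ ∈ ℂ^{n+1} satisfy ρ(z) ≤ 0 and ρ(ζ) = 0. Then Re a(z,ζ) ≥ 0, and Re a(z,ζ) = 0 if and only if Ψ(z) = Ψ(ζ). (This expresses that a is a holomorphic support function for the strictly pseudo-convex domain Ω = {ρ < 0}, obtained by pulling back the support function of the ball along the Fornaess-type embedding Ψ.) -/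
open Complex

/-- `ρ(z) := 4|1 − z₁z₂|² + ‖z‖² − 3` on `ℂ^{n+1}`. -/
noncomputable def rho (n : ℕ) (z : Fin (n + 1) → ℂ) : ℝ :=
  4 * Complex.normSq (1 - z 0 * z 1) + (∑ j : Fin (n + 1), Complex.normSq (z j)) - 3

/-- The polynomial map `Ψ(z) := (2(1 − z₁z₂), z₁, z₂, …, z_{n+1}) : ℂ^{n+1} → ℂ^{n+2}`. -/
noncomputable def Psi (n : ℕ) (z : Fin (n + 1) → ℂ) : Fin (n + 2) → ℂ :=
  Fin.cons (2 * (1 - z 0 * z 1)) z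

/-- The support function `a(z,ζ) := Σ_j (Ψ_j(ζ) − Ψ_j(z)) · conj(Ψ_j(ζ))`. -/
noncomputable def aSupp (n : ℕ) (z ζ : Fin (n + 1) → ℂ) : ℂ :=
  ∑ j : Fin (n + 2), (Psi n ζ j - Psi n z j) * (starRingEnd ℂ) (Psi n ζ j)

lemma term_id (a b : ℂ) :
    ((b - a) * (starRingEnd ℂ) b).re =
      (Complex.normSq (b - a) + Complex.normSq b - Complex.normSq a) / 2 := by
  simp [Complex.mul_re, Complex.normSq_apply]
  ring

lemma sum_normSq_Psi (n : ℕ) (w : Fin (n + 1) → ℂ) :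
    ∑ j : Fin (n + 2), Complex.normSq (Psi n w j) = rho n w + 3 := by
  rw [Psi, Fin.sum_univ_succ]
  simp only [Fin.cons_zero, Fin.cons_succ, rho]
  have : Complex.normSq (2 * (1 - w 0 * w 1)) = 4 * Complex.normSq (1 - w 0 * w 1) := by
    rw [Complex.normSq_mul]; norm_num
  rw [this]; ring

lemma key_id (n : ℕ) (z ζ : Fin (n + 1) → ℂ) :
    (aSupp n z ζ).re =
      ((∑ j : Fin (n + 2), Complex.normSq (Psi n ζ j - Psi n z j))
        + (rho n ζ + 3) - (rho n z + 3)) / 2 := by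
  rw [aSupp, Complex.re_sum]
  simp_rw [term_id]
  rw [← Finset.sum_div]
  congr 1
  rw [Finset.sum_sub_distrib, Finset.sum_add_distrib, sum_normSq_Psi, sum_normSq_Psi]

/-- Let `n ≥ 1` and `z, ζ ∈ ℂ^{n+1}` with `ρ(z) ≤ 0` and `ρ(ζ) = 0`. Then
`Re a(z,ζ) ≥ 0`, with equality if and only if `Ψ(z) = Ψ(ζ)`. (The function `a` is a
holomorphic support function for the strictly pseudo-convex domain `Ω = {ρ < 0}`.) -/
theorem stmt14 (n : ℕ) (hn : 1 ≤ n) (z ζ : Fin (n + 1) → ℂ)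
    (hz : rho n z ≤ 0) (hζ : rho n ζ = 0) :
    0 ≤ (aSupp n z ζ).re ∧ ((aSupp n z ζ).re = 0 ↔ Psi n z = Psi n ζ) := by
  have hkey := key_id n z ζ
  have hsum : 0 ≤ ∑ j : Fin (n + 2), Complex.normSq (Psi n ζ j - Psi n z j) :=
    Finset.sum_nonneg fun j _ => Complex.normSq_nonneg _
  constructor
  · rw [hkey]; rw [hζ]; linarith
  · constructor
    · intro h
      rw [hkey, hζ] at h
      have hs : ∑ j : Fin (n + 2), Complex.normSq (Psi n ζ j - Psi n z j) = 0 := by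
        linarith
      have := (Finset.sum_eq_zero_iff_of_nonneg
        (fun j _ => Complex.normSq_nonneg (Psi n ζ j - Psi n z j))).mp hs
      funext j
      have hj := this j (Finset.mem_univ j)
      have := Complex.normSq_eq_zero.mp hj
      exact (sub_eq_zero.mp this).symm
    · intro h
      rw [aSupp]
      simp [h]
end

section
/- For every n ≥ 1 and all z, w ∈ ℂ^{n+1}, the Levi form of ρ is given by: (d²/dt²)|_{t=0} ρ(z + t·w) + (d²/dt²)|_{t=0} ρ(z + t·(i·w)) = 4‖w‖² + 16|z₁w₂ + z₂w₁|², where t ranges over ℝ. In particular this quantity is strictly positive whenever w ≠ 0, so ρ is strictly plurisubharmonic on ℂ^{n+1}. -/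
open Complex

/-!
Along a real line `t ↦ z + t • w`, `ρ` is a quartic polynomial in `t`, so its second derivative
at `0` is twice the `t²` coefficient `4|z₁w₂ + z₂w₁|² − 8 Re((1 − z₁z₂) conj (w₁w₂)) + ‖w‖²`.
Replacing `w` by `i • w` multiplies `z₁w₂ + z₂w₁` by `i` and `w₁w₂` by `−1`, so the mixed term
cancels in the sum.
-/

open ComplexConjugate Polynomial

theorem Polynomial.iteratedDeriv_eval {𝕜 : Type*} [NontriviallyNormedField 𝕜] (p : 𝕜[X]) (k : ℕ) :
    iteratedDeriv k (fun t => p.eval t) = fun t => (derivative^[k] p).eval t := by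
  induction k generalizing p with
  | zero => simp
  | succ k ih =>
    have hderiv : deriv (fun t => p.eval t) = fun t => p.derivative.eval t := by
      ext t
      exact p.deriv
    rw [iteratedDeriv_succ', hderiv, ih, Function.iterate_succ_apply]

theorem iteratedDeriv_two_quartic (a b c d e : ℝ) :
    iteratedDeriv 2 (fun t : ℝ => a + b * t + c * t ^ 2 + d * t ^ 3 + e * t ^ 4) 0 = 2 * c := by
  have h := congrFun
    (iteratedDeriv_eval (C a + C b * X + C c * X ^ 2 + C d * X ^ 3 + C e * X ^ 4) 2) 0
  simp only [eval_add, eval_mul, eval_C, eval_X, eval_pow] at h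
  rw [h]
  simp [two_mul, mul_add]

namespace Complex

theorem normSq_add_ofReal_mul (a b : ℂ) (t : ℝ) :
    normSq (a + t * b) = normSq a + 2 * (a * conj b).re * t + normSq b * t ^ 2 := by
  rw [normSq_add, normSq_mul, normSq_ofReal, map_mul, conj_ofReal, mul_left_comm, re_ofReal_mul]
  ring

theorem normSq_add_ofReal_mul_add_sq_mul (a b c : ℂ) (t : ℝ) :
    normSq (a + t * b + t ^ 2 * c) = normSq a + 2 * (a * conj b).re * t
      + (normSq b + 2 * (a * conj c).re) * t ^ 2 + 2 * (b * conj c).re * t ^ 3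
      + normSq c * t ^ 4 := by
  have h : a + t * b + t ^ 2 * c = a + t * (b + t * c) := by ring
  rw [h, normSq_add_ofReal_mul, normSq_add_ofReal_mul, map_add, map_mul, conj_ofReal, mul_add,
    mul_left_comm, add_re, re_ofReal_mul]
  ring

end Complex

theorem exists_rho_add_smul_eq (n : ℕ) (z w : Fin (n + 1) → ℂ) : ∃ b d e : ℝ, ∀ t : ℝ,
    rho n (z + t • w) = rho n z + b * t
      + (4 * normSq (z 0 * w 1 + z 1 * w 0) - 8 * ((1 - z 0 * z 1) * conj (w 0 * w 1)).re
        + ∑ j, normSq (w j)) * t ^ 2 + d * t ^ 3 + e * t ^ 4 := by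
  refine ⟨-8 * ((1 - z 0 * z 1) * conj (z 0 * w 1 + z 1 * w 0)).re
      + 2 * ∑ j, (z j * conj (w j)).re,
    8 * ((z 0 * w 1 + z 1 * w 0) * conj (w 0 * w 1)).re, 4 * normSq (w 0 * w 1), fun t => ?_⟩
  have hfactor : 1 - (z + t • w) 0 * (z + t • w) 1
      = (1 - z 0 * z 1) + t * -(z 0 * w 1 + z 1 * w 0) + t ^ 2 * -(w 0 * w 1) := by
    simp only [Pi.add_apply, Pi.smul_apply, real_smul]; ring
  rw [rho, rho, hfactor, normSq_add_ofReal_mul_add_sq_mul]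
  simp only [Pi.add_apply, Pi.smul_apply, real_smul, normSq_add_ofReal_mul,
    Finset.sum_add_distrib, ← Finset.sum_mul, ← Finset.mul_sum, map_neg, mul_neg, neg_mul,
    neg_neg, normSq_neg, neg_re]
  ring

theorem iteratedDeriv_two_rho_add_smul (n : ℕ) (z w : Fin (n + 1) → ℂ) :
    iteratedDeriv 2 (fun t : ℝ => rho n (z + t • w)) 0
      = 2 * (4 * normSq (z 0 * w 1 + z 1 * w 0) - 8 * ((1 - z 0 * z 1) * conj (w 0 * w 1)).re
        + ∑ j, normSq (w j)) := by
  obtain ⟨b, d, e, h⟩ := exists_rho_add_smul_eq n z w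
  rw [funext h, iteratedDeriv_two_quartic]

theorem sum_normSq_pos {ι : Type*} [Fintype ι] {w : ι → ℂ} (hw : w ≠ 0) :
    0 < ∑ j, normSq (w j) := by
  obtain ⟨j, hj⟩ := Function.ne_iff.mp hw
  exact Finset.sum_pos' (fun i _ => normSq_nonneg _) ⟨j, Finset.mem_univ j, normSq_pos.2 hj⟩

theorem stmt16_general (n : ℕ) (z w : Fin (n + 1) → ℂ) :
    (iteratedDeriv 2 (fun t : ℝ => rho n (z + t • w)) 0 +
        iteratedDeriv 2 (fun t : ℝ => rho n (z + t • (Complex.I • w))) 0 =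
      4 * (∑ j : Fin (n + 1), Complex.normSq (w j)) +
        16 * Complex.normSq (z 0 * w 1 + z 1 * w 0)) ∧
    (w ≠ 0 →
      0 < 4 * (∑ j : Fin (n + 1), Complex.normSq (w j)) +
        16 * Complex.normSq (z 0 * w 1 + z 1 * w 0)) := by
  refine ⟨?_, fun hw => by linarith [sum_normSq_pos hw, normSq_nonneg (z 0 * w 1 + z 1 * w 0)]⟩
  have hIw : ∀ j, (I • w) j = I * w j := fun j => rfl
  rw [iteratedDeriv_two_rho_add_smul, iteratedDeriv_two_rho_add_smul]
  have hB : z 0 * (I • w) 1 + z 1 * (I • w) 0 = I * (z 0 * w 1 + z 1 * w 0) := by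
    rw [hIw, hIw]; ring
  have hC : (I • w) 0 * (I • w) 1 = -(w 0 * w 1) := by
    rw [hIw, hIw, mul_mul_mul_comm, I_mul_I, neg_one_mul]
  rw [hB, hC]
  simp only [hIw, normSq_mul, normSq_I, one_mul, map_neg, mul_neg, neg_re]
  ring

/-- For every `n ≥ 1` and all `z, w ∈ ℂ^{n+1}`, the Levi form of `ρ` is given by
`(d²/dt²)|₀ ρ(z + t·w) + (d²/dt²)|₀ ρ(z + t·(i·w)) = 4‖w‖² + 16|z₁w₂ + z₂w₁|²`
(`t` real); in particular this quantity is strictly positive whenever `w ≠ 0`,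
so `ρ` is strictly plurisubharmonic on `ℂ^{n+1}`. -/
theorem stmt16 (n : ℕ) (hn : 1 ≤ n) (z w : Fin (n + 1) → ℂ) :
    (iteratedDeriv 2 (fun t : ℝ => rho n (z + t • w)) 0 +
        iteratedDeriv 2 (fun t : ℝ => rho n (z + t • (Complex.I • w))) 0 =
      4 * (∑ j : Fin (n + 1), Complex.normSq (w j)) +
        16 * Complex.normSq (z 0 * w 1 + z 1 * w 0)) ∧
    (w ≠ 0 →
      0 < 4 * (∑ j : Fin (n + 1), Complex.normSq (w j)) +
        16 * Complex.normSq (z 0 * w 1 + z 1 * w 0)) :=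
  stmt16_general n z w
end

section
/- For every n ≥ 1 and every z ∈ ℂ^{n+1} with ρ(z) = 0, the real Fréchet derivative of ρ : ℂ^{n+1} → ℝ at z is nonzero; that is, dρ ≠ 0 on the boundary ∂Ω of the domain Ω = {ρ < 0}, so ∂Ω is a smooth hypersurface. -/
/-!
The real derivative of `ρ` at `z` is `v ↦ ∑ⱼ Re (conj gⱼ · vⱼ)` with gradient
`g = 2z − 8W (z̄₂ e₁ + z̄₁ e₂)`, `W = 1 − z₁z₂`; pairing with `v = g` shows that `dρ = 0` forces
`g = 0`, i.e. `zⱼ = 0` for `j ≥ 3`, `z₁ = 4W z̄₂` and `z₂ = 4W z̄₁`. Taking norms, either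
`z₁ = z₂ = 0`, where `ρ = 1`, or `|W| = 1/4` and `|z₁| = |z₂|`. In the latter case `ρ = 0` gives
`|z₁|² = 11/8`, whereas `|z₁z₂| = |1 − W| ≤ 5/4`.
-/

open Complex

open ComplexConjugate ContinuousLinearMap
open scoped InnerProductSpace

theorem eq_zero_of_forall_sum_inner_eq_zero {ι E : Type*} [Fintype ι] [NormedAddCommGroup E]
    [InnerProductSpace ℝ E] {g : ι → E} (h : ∀ v : ι → E, ∑ i, ⟪g i, v i⟫_ℝ = 0) : g = 0 := by
  have hg := h g
  simp_rw [real_inner_self_eq_norm_sq] at hg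
  funext i
  simpa using
    (Finset.sum_eq_zero_iff_of_nonneg fun i _ => sq_nonneg ‖g i‖).1 hg i (Finset.mem_univ i)

theorem sum_inner_pi_single {ι E : Type*} [Fintype ι] [DecidableEq ι] [NormedAddCommGroup E]
    [InnerProductSpace ℝ E] (i : ι) (a : E) (v : ι → E) :
    ∑ j, ⟪(Pi.single i a : ι → E) j, v j⟫_ℝ = ⟪a, v i⟫_ℝ := by
  rw [Finset.sum_eq_single i (fun j _ hj => by rw [Pi.single_eq_of_ne hj, inner_zero_left])
    (fun h => (h (Finset.mem_univ i)).elim), Pi.single_eq_same]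

noncomputable def rhoGrad (n : ℕ) (z : Fin (n + 1) → ℂ) : Fin (n + 1) → ℂ :=
  2 • z - Pi.single 0 (8 * (1 - z 0 * z 1) * conj (z 1))
    - Pi.single 1 (8 * (1 - z 0 * z 1) * conj (z 0))

theorem hasFDerivAt_rho (n : ℕ) (z : Fin (n + 1) → ℂ) :
    HasFDerivAt (rho n) (∑ j, (innerSL ℝ (rhoGrad n z j)).comp (proj j)) z := by
  have hW : HasFDerivAt (fun z : Fin (n + 1) → ℂ => 1 - z 0 * z 1)
      (-(z 0 • proj (R := ℝ) 1 + z 1 • proj 0)) z :=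
    ((hasFDerivAt_apply 0 z).mul (hasFDerivAt_apply 1 z)).const_sub 1
  have hrho : rho n = fun y : Fin (n + 1) → ℂ =>
      4 * ‖1 - y 0 * y 1‖ ^ 2 + ∑ j, ‖y j‖ ^ 2 - 3 := by
    funext y
    simp [rho, Complex.sq_norm]
  rw [hrho]
  refine (((hW.norm_sq.const_mul 4).add (HasFDerivAt.fun_sum (u := Finset.univ)
    fun j _ => (hasFDerivAt_apply j z).norm_sq)).sub_const 3).congr_fderiv ?_
  refine ContinuousLinearMap.ext fun v => ?_
  simp only [FunLike.coe_sum, Finset.sum_apply, coe_comp, Function.comp_apply, proj_apply,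
    innerSL_apply_apply, rhoGrad, Pi.sub_apply, inner_sub_left, Finset.sum_sub_distrib,
    sum_inner_pi_single]
  simp [Complex.inner, Finset.sum_add_distrib]
  ring_nf

theorem rhoGrad_eq_zero_of_fderiv_eq_zero {n : ℕ} {z : Fin (n + 1) → ℂ}
    (h : fderiv ℝ (rho n) z = 0) : rhoGrad n z = 0 :=
  eq_zero_of_forall_sum_inner_eq_zero fun v => by
    simpa [(hasFDerivAt_rho n z).fderiv] using congr($h v)

theorem eq_four_mul_conj_of_rhoGrad_eq_zero {n : ℕ} {z : Fin (n + 1) → ℂ}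
    (h01 : (0 : Fin (n + 1)) ≠ 1) (h : rhoGrad n z = 0) :
    z 0 = 4 * (1 - z 0 * z 1) * conj (z 1) ∧ z 1 = 4 * (1 - z 0 * z 1) * conj (z 0) ∧
      ∀ j, j ≠ 0 ∧ j ≠ 1 → z j = 0 := by
  have hj (j : Fin (n + 1)) := congrFun h j
  simp only [rhoGrad, Pi.sub_apply, Pi.smul_apply, Pi.zero_apply] at hj
  refine ⟨?_, ?_, fun j ⟨hj0, hj1⟩ => ?_⟩
  · have h0 := hj 0
    rw [Pi.single_eq_same, Pi.single_eq_of_ne h01] at h0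
    linear_combination h0 / 2
  · have h1 := hj 1
    rw [Pi.single_eq_same, Pi.single_eq_of_ne h01.symm] at h1
    linear_combination h1 / 2
  · have h2 := hj j
    rw [Pi.single_eq_of_ne hj0, Pi.single_eq_of_ne hj1] at h2
    linear_combination h2 / 2

theorem rho_eq_of_forall_ne_zero_one {n : ℕ} {z : Fin (n + 1) → ℂ} (h01 : (0 : Fin (n + 1)) ≠ 1)
    (hz : ∀ j, j ≠ 0 ∧ j ≠ 1 → z j = 0) :
    rho n z = 4 * normSq (1 - z 0 * z 1) + normSq (z 0) + normSq (z 1) - 3 := by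
  rw [rho, Fintype.sum_eq_add 0 1 h01 fun j hj => by rw [hz j hj, map_zero], add_assoc]

theorem four_normSq_one_sub_mul_add_normSq_add_normSq_ne_three {a b : ℂ}
    (ha : a = 4 * (1 - a * b) * conj b) (hb : b = 4 * (1 - a * b) * conj a) :
    4 * normSq (1 - a * b) + normSq a + normSq b ≠ 3 := by
  rcases eq_or_ne a 0 with rfl | ha0
  · obtain rfl : b = 0 := by simpa using hb
    norm_num
  simp only [normSq_eq_norm_sq]
  set w := ‖1 - a * b‖
  have hna : ‖a‖ = 4 * w * ‖b‖ := by simpa using congrArg norm ha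
  have hnb : ‖b‖ = 4 * w * ‖a‖ := by simpa using congrArg norm hb
  have hw : w = 1 / 4 := by
    have h : ‖a‖ * (16 * w ^ 2 - 1) = 0 := by linear_combination -hna - 4 * w * hnb
    have := (mul_eq_zero.1 h).resolve_left (norm_ne_zero_iff.2 ha0)
    nlinarith [norm_nonneg (1 - a * b)]
  have hab : ‖a‖ * ‖b‖ ≤ 1 + w := by
    calc ‖a‖ * ‖b‖ = ‖1 - (1 - a * b)‖ := by rw [sub_sub_cancel, norm_mul]
      _ ≤ ‖(1 : ℂ)‖ + w := norm_sub_le _ _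
      _ = 1 + w := by rw [norm_one]
  have : ‖a‖ = ‖b‖ := by rw [hna, hw]; ring
  intro h
  nlinarith

/-- For every `n ≥ 1` and every `z ∈ ℂ^{n+1}` with `ρ(z) = 0`, the real Fréchet
derivative of `ρ` at `z` is nonzero; that is, `dρ ≠ 0` on the boundary `∂Ω` of the
domain `Ω = {ρ < 0}`, so `∂Ω` is a smooth hypersurface. -/
theorem stmt17 (n : ℕ) (hn : 1 ≤ n) (z : Fin (n + 1) → ℂ) (hz : rho n z = 0) :
    fderiv ℝ (rho n) z ≠ 0 := by
  intro hD
  have h01 : (0 : Fin (n + 1)) ≠ 1 := by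
    obtain ⟨m, rfl⟩ : ∃ m, n = m + 1 := ⟨n - 1, by omega⟩
    exact zero_ne_one
  obtain ⟨hz0, hz1, hzj⟩ :=
    eq_four_mul_conj_of_rhoGrad_eq_zero h01 (rhoGrad_eq_zero_of_fderiv_eq_zero hD)
  rw [rho_eq_of_forall_ne_zero_one h01 hzj, sub_eq_zero] at hz
  exact four_normSq_one_sub_mul_add_normSq_add_normSq_ne_three hz0 hz1 hz
end
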